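/- Let C(Π) be the proper cycle partition of a finite balanced set Π of Poisson edges, and let S ⊆ C(Π). Then the set Π' := (Π \ ∪S) ∪ (∪_{η ∈ S} η^{-1}) obtained by replacing each cycle in S by its directional inverse is again balanced, and its proper cycle partition is C(Π') = (C(Π) \ S) ∪ {η^{-1} : η ∈ S}. -/

import Mathlib

open scoped Classical

namespace BKT

/-- A Poisson edge: a directed edge of a graph on `V` decorated with a time. -/
abbrev PEdge (V : Type*) := (V × V) × ℝ

variable {V : Type*}

/-- The edges of `Π` going out of `x`. -/
noncomputable def outEdges (Pi : Finset (PEdge V)) (x : V) : Finset (PEdge V) :=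
  Pi.filter (fun e => e.1.1 = x)

/-- The edges of `Π` coming into `x`. -/
noncomputable def inEdges (Pi : Finset (PEdge V)) (x : V) : Finset (PEdge V) :=
  Pi.filter (fun e => e.1.2 = x)

/-- `Π` is balanced: at every vertex the in-degree equals the out-degree. -/
def Balanced (Pi : Finset (PEdge V)) : Prop :=
  ∀ x : V, (outEdges Pi x).card = (inEdges Pi x).card

/-- All times of the Poisson edges of `Π` are distinct. -/
def DistinctTimes (Pi : Finset (PEdge V)) : Prop :=
  ∀ e ∈ Pi, ∀ e' ∈ Pi, e.2 = e'.2 → e = e'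

/-- The edge `e` touches the vertex `x`. -/
def touches (e : PEdge V) (x : V) : Prop := e.1.1 = x ∨ e.1.2 = x

/-- The set of vertices incident to some edge of `η`. -/
noncomputable def verts (η : Finset (PEdge V)) : Finset V :=
  η.image (fun e => e.1.1) ∪ η.image (fun e => e.1.2)

/-- The edge set `η` is connected: no nontrivial split into two parts that do
not share a vertex. -/
def ConnectedEdges (η : Finset (PEdge V)) : Prop :=
  ∀ s ⊆ η, s.Nonempty → s ≠ η →
    ∃ e ∈ s, ∃ e' ∈ η \ s, ∃ x : V, touches e x ∧ touches e' x

/-- `η` is a cycle: a nonempty connected set of Poisson edges in which every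
visited vertex has in-degree and out-degree exactly one. -/
def IsCycle (η : Finset (PEdge V)) : Prop :=
  η.Nonempty ∧ ConnectedEdges η ∧
    ∀ x ∈ verts η, (outEdges η x).card = 1 ∧ (inEdges η x).card = 1

/-- `P` is a partition of `Π` into cycles. -/
def IsCyclePartition (Pi : Finset (PEdge V)) (P : Finset (Finset (PEdge V))) : Prop :=
  (∀ η ∈ P, IsCycle η) ∧ (∀ η ∈ P, η ⊆ Pi) ∧
    (∀ η ∈ P, ∀ η' ∈ P, η ≠ η' → Disjoint η η') ∧
    (∀ e ∈ Pi, ∃ η ∈ P, e ∈ η)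

/-- One step of the activation-time relation: `η` and `η'` share a vertex at
which the activation time of `η` is at most that of `η'`. -/
def stepRel (η η' : Finset (PEdge V)) : Prop :=
  ∃ e ∈ η, ∃ e' ∈ η', e.1.1 = e'.1.1 ∧ e.2 ≤ e'.2

/-- The relation `⪯` on a cycle partition `P`, generated by chains of cycles
in `P` with nondecreasing activation times at shared vertices. -/
def precRel (P : Finset (Finset (PEdge V))) (η η' : Finset (PEdge V)) : Prop :=
  Relation.ReflTransGen (fun a b => a ∈ P ∧ b ∈ P ∧ stepRel a b) η η'

/-- `P` is a proper cycle partition of `Π`: a cycle partition on which `⪯`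
is a partial order (i.e., antisymmetric). -/
def IsProperCyclePartition (Pi : Finset (PEdge V)) (P : Finset (Finset (PEdge V))) : Prop :=
  IsCyclePartition Pi P ∧
    ∀ η ∈ P, ∀ η' ∈ P, precRel P η η' → precRel P η' η → η = η'


/-- The activation time of `η` at `x`: the time of the unique edge of `η`
leaving `x` (expressed as the sum over outgoing edges, which for a cycle has a
single term). -/
noncomputable def actTime (η : Finset (PEdge V)) (x : V) : ℝ :=
  ∑ e ∈ outEdges η x, e.2

/-- The directional inverse of a cycle: every edge `(xy, τ)` is replaced by
`(yx, a_y(η))`. -/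
noncomputable def dirInv (η : Finset (PEdge V)) : Finset (PEdge V) :=
  η.image (fun e => ((e.1.2, e.1.1), actTime η e.1.2))

/-!
Every edge of `η⁻¹` carries the time of an edge of `η`, so with distinct times an inverted cycle
meets `Π` only inside the cycle it replaces, and the new family is again a partition of `Π'` into
cycles; balance follows since cycles are balanced. A cycle and its inverse visit the same vertices
with the same activation times, and between cycles `stepRel` depends on nothing else. Hence undoing
the inversion, which is injective on the new family because inversion is an involution on cycles,
maps `⪯`-chains of the new partition to `⪯`-chains of `C(Π)`, and antisymmetry carries over.
-/

section Edges

variable {Pi η : Finset (PEdge V)} {x : V} {e : PEdge V}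

@[simp]
lemma mem_outEdges : e ∈ outEdges Pi x ↔ e ∈ Pi ∧ e.1.1 = x := Finset.mem_filter

@[simp]
lemma mem_inEdges : e ∈ inEdges Pi x ↔ e ∈ Pi ∧ e.1.2 = x := Finset.mem_filter

lemma fst_mem_verts (he : e ∈ η) : e.1.1 ∈ verts η :=
  Finset.mem_union_left _ (Finset.mem_image_of_mem _ he)

lemma snd_mem_verts (he : e ∈ η) : e.1.2 ∈ verts η :=
  Finset.mem_union_right _ (Finset.mem_image_of_mem _ he)

lemma outEdges_eq_empty (hx : x ∉ verts η) : outEdges η x = ∅ :=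
  Finset.filter_eq_empty_iff.mpr fun _ he hex => hx (hex ▸ fst_mem_verts he)

lemma inEdges_eq_empty (hx : x ∉ verts η) : inEdges η x = ∅ :=
  Finset.filter_eq_empty_iff.mpr fun _ he hex => hx (hex ▸ snd_mem_verts he)

lemma outEdges_dirInv (η : Finset (PEdge V)) (x : V) :
    outEdges (dirInv η) x = (inEdges η x).image fun e => ((e.1.2, e.1.1), actTime η e.1.2) := by
  rw [outEdges, dirInv, Finset.filter_image]
  rfl

lemma inEdges_dirInv (η : Finset (PEdge V)) (x : V) :
    inEdges (dirInv η) x = (outEdges η x).image fun e => ((e.1.2, e.1.1), actTime η e.1.2) := by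
  rw [inEdges, dirInv, Finset.filter_image]
  rfl

lemma verts_dirInv (η : Finset (PEdge V)) : verts (dirInv η) = verts η := by
  rw [verts, verts, dirInv, Finset.image_image, Finset.image_image, Finset.union_comm]
  rfl

lemma ConnectedEdges.image (hη : ConnectedEdges η) (f : PEdge V → PEdge V)
    (hf : ∀ e x, touches e x → touches (f e) x) : ConnectedEdges (η.image f) := by
  intro s hs hsne hsη
  set s' := η.filter (f · ∈ s)
  have hs' : s'.image f = s := by
    refine (Finset.image_subset_iff.mpr fun e he => (Finset.mem_filter.mp he).2).antisymm
      fun e' he' => ?_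
    obtain ⟨e, he, rfl⟩ := Finset.mem_image.mp (hs he')
    exact Finset.mem_image_of_mem f (Finset.mem_filter.mpr ⟨he, he'⟩)
  have hs'ne : s'.Nonempty := by
    rw [← Finset.image_nonempty (f := f), hs']
    exact hsne
  have hs'η : s' ≠ η := fun h => hsη (by rw [← hs', h])
  obtain ⟨e, he, e', he', x, hex, he'x⟩ := hη s' (Finset.filter_subset _ _) hs'ne hs'η
  obtain ⟨he'η, he's⟩ := Finset.mem_sdiff.mp he'
  refine ⟨f e, (Finset.mem_filter.mp he).2, f e', ?_, x, hf e x hex, hf e' x he'x⟩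
  exact Finset.mem_sdiff.mpr
    ⟨Finset.mem_image_of_mem f he'η, fun h => he's (Finset.mem_filter.mpr ⟨he'η, h⟩)⟩

end Edges

namespace IsCycle

variable {η : Finset (PEdge V)} {x : V} {e e' : PEdge V}

lemma outEdges_eq_singleton (hη : IsCycle η) (he : e ∈ η) : outEdges η e.1.1 = {e} := by
  obtain ⟨e₀, h⟩ := Finset.card_eq_one.mp (hη.2.2 _ (fst_mem_verts he)).1
  have : e ∈ outEdges η e.1.1 := mem_outEdges.mpr ⟨he, rfl⟩
  rw [h, Finset.mem_singleton] at this
  rw [h, this]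

lemma inEdges_eq_singleton (hη : IsCycle η) (he : e ∈ η) : inEdges η e.1.2 = {e} := by
  obtain ⟨e₀, h⟩ := Finset.card_eq_one.mp (hη.2.2 _ (snd_mem_verts he)).2
  have : e ∈ inEdges η e.1.2 := mem_inEdges.mpr ⟨he, rfl⟩
  rw [h, Finset.mem_singleton] at this
  rw [h, this]

lemma exists_mem_fst_eq (hη : IsCycle η) (hx : x ∈ verts η) : ∃ e ∈ η, e.1.1 = x := by
  obtain ⟨e, h⟩ := Finset.card_eq_one.mp (hη.2.2 x hx).1
  exact ⟨e, mem_outEdges.mp (h ▸ Finset.mem_singleton_self e)⟩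

lemma exists_mem_snd_eq (hη : IsCycle η) (hx : x ∈ verts η) : ∃ e ∈ η, e.1.2 = x := by
  obtain ⟨e, h⟩ := Finset.card_eq_one.mp (hη.2.2 x hx).2
  exact ⟨e, mem_inEdges.mp (h ▸ Finset.mem_singleton_self e)⟩

lemma actTime_eq (hη : IsCycle η) (he : e ∈ η) : actTime η e.1.1 = e.2 := by
  rw [actTime, hη.outEdges_eq_singleton he, Finset.sum_singleton]

lemma eq_of_snd_eq (hη : IsCycle η) (he : e ∈ η) (he' : e' ∈ η) (h : e.1.2 = e'.1.2) :
    e = e' := by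
  have : e' ∈ inEdges η e.1.2 := mem_inEdges.mpr ⟨he', h.symm⟩
  rw [hη.inEdges_eq_singleton he, Finset.mem_singleton] at this
  exact this.symm

lemma card_outEdges_eq_card_inEdges (hη : IsCycle η) (x : V) :
    (outEdges η x).card = (inEdges η x).card := by
  by_cases hx : x ∈ verts η
  · rw [(hη.2.2 x hx).1, (hη.2.2 x hx).2]
  · rw [outEdges_eq_empty hx, inEdges_eq_empty hx]

lemma actTime_dirInv (hη : IsCycle η) (x : V) : actTime (dirInv η) x = actTime η x := by
  by_cases hx : x ∈ verts η
  · obtain ⟨e, he, rfl⟩ := hη.exists_mem_snd_eq hx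
    rw [actTime, outEdges_dirInv, hη.inEdges_eq_singleton he, Finset.image_singleton,
      Finset.sum_singleton]
  · rw [actTime, actTime, outEdges_dirInv, inEdges_eq_empty hx, outEdges_eq_empty hx]
    rfl

lemma injOn_dirInv_edge (hη : IsCycle η) :
    Set.InjOn (fun e : PEdge V => ((e.1.2, e.1.1), actTime η e.1.2)) η :=
  fun _ he _ he' h => hη.eq_of_snd_eq he he' (congrArg (fun e : PEdge V => e.1.1) h)

protected lemma dirInv (hη : IsCycle η) : IsCycle (dirInv η) := by
  refine ⟨hη.1.image _, hη.2.1.image _ fun _ _ => Or.symm, fun x hx => ?_⟩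
  rw [verts_dirInv] at hx
  rw [outEdges_dirInv, inEdges_dirInv,
    Finset.card_image_of_injOn (hη.injOn_dirInv_edge.mono fun _ he => (mem_inEdges.mp he).1),
    Finset.card_image_of_injOn (hη.injOn_dirInv_edge.mono fun _ he => (mem_outEdges.mp he).1)]
  exact (hη.2.2 x hx).symm

lemma dirInv_dirInv (hη : IsCycle η) : dirInv (dirInv η) = η := by
  rw [dirInv, funext hη.actTime_dirInv, dirInv, Finset.image_image]
  conv_rhs => rw [← Finset.image_id (s := η)]
  exact Finset.image_congr fun e he => by simp [hη.actTime_eq he]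

lemma exists_mem_snd_eq_of_mem_dirInv (hη : IsCycle η) (he : e ∈ dirInv η) :
    ∃ e' ∈ η, e'.2 = e.2 := by
  obtain ⟨e₀, he₀, rfl⟩ := Finset.mem_image.mp he
  obtain ⟨e', he', hx⟩ := hη.exists_mem_fst_eq (snd_mem_verts he₀)
  exact ⟨e', he', by rw [← hx, hη.actTime_eq he']⟩

end IsCycle

lemma IsCyclePartition.balanced {Pi : Finset (PEdge V)} {P : Finset (Finset (PEdge V))}
    (hP : IsCyclePartition Pi P) : Balanced Pi := by
  obtain ⟨hcyc, hsub, hdisj, hcov⟩ := hP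
  have hPi : Pi = P.biUnion id := by
    ext e
    simp only [Finset.mem_biUnion, id]
    exact ⟨hcov e, fun ⟨η, hη, he⟩ => hsub η hη he⟩
  have hdisj' : (P : Set (Finset (PEdge V))).PairwiseDisjoint id := hdisj
  intro x
  rw [hPi, outEdges, inEdges, Finset.filter_biUnion, Finset.filter_biUnion,
    Finset.card_biUnion (hdisj'.mono fun _ => Finset.filter_subset _ _),
    Finset.card_biUnion (hdisj'.mono fun _ => Finset.filter_subset _ _)]
  exact Finset.sum_congr rfl fun η hη => (hcyc η hη).card_outEdges_eq_card_inEdges x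

section StepRel

variable {a b : Finset (PEdge V)}

lemma stepRel_iff (ha : IsCycle a) (hb : IsCycle b) :
    stepRel a b ↔ ∃ x ∈ verts a, x ∈ verts b ∧ actTime a x ≤ actTime b x := by
  constructor
  · rintro ⟨e, he, e', he', hx, hle⟩
    refine ⟨e.1.1, fst_mem_verts he, hx ▸ fst_mem_verts he', ?_⟩
    rwa [ha.actTime_eq he, hx, hb.actTime_eq he']
  · rintro ⟨x, hxa, hxb, hle⟩
    obtain ⟨e, he, rfl⟩ := ha.exists_mem_fst_eq hxa
    obtain ⟨e', he', hx⟩ := hb.exists_mem_fst_eq hxb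
    refine ⟨e, he, e', he', hx.symm, ?_⟩
    rwa [ha.actTime_eq he, ← hx, hb.actTime_eq he'] at hle

lemma stepRel_dirInv_left (ha : IsCycle a) (hb : IsCycle b) :
    stepRel (dirInv a) b ↔ stepRel a b := by
  simp only [stepRel_iff ha.dirInv hb, stepRel_iff ha hb, verts_dirInv, ha.actTime_dirInv]

lemma stepRel_dirInv_right (ha : IsCycle a) (hb : IsCycle b) :
    stepRel a (dirInv b) ↔ stepRel a b := by
  simp only [stepRel_iff ha hb.dirInv, stepRel_iff ha hb, verts_dirInv, hb.actTime_dirInv]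

end StepRel

section DistinctTimes

variable {Pi a b η : Finset (PEdge V)}

lemma DistinctTimes.mem_of_mem_dirInv (hdist : DistinctTimes Pi) (ha : IsCycle a) (haPi : a ⊆ Pi)
    {e : PEdge V} (he : e ∈ dirInv a) (hePi : e ∈ Pi) : e ∈ a := by
  obtain ⟨e', he', ht⟩ := ha.exists_mem_snd_eq_of_mem_dirInv he
  rwa [← hdist e' (haPi he') e hePi ht]

lemma DistinctTimes.disjoint_dirInv_right (hdist : DistinctTimes Pi) (hb : IsCycle b)
    (hbPi : b ⊆ Pi) (hηPi : η ⊆ Pi) (h : Disjoint η b) : Disjoint η (dirInv b) :=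
  Finset.disjoint_left.mpr fun _ he heb =>
    Finset.disjoint_left.mp h he (hdist.mem_of_mem_dirInv hb hbPi heb (hηPi he))

lemma DistinctTimes.disjoint_dirInv (hdist : DistinctTimes Pi) (ha : IsCycle a) (hb : IsCycle b)
    (haPi : a ⊆ Pi) (hbPi : b ⊆ Pi) (h : Disjoint a b) : Disjoint (dirInv a) (dirInv b) := by
  refine Finset.disjoint_left.mpr fun e hea heb => ?_
  obtain ⟨e₁, he₁, ht₁⟩ := ha.exists_mem_snd_eq_of_mem_dirInv hea
  obtain ⟨e₂, he₂, ht₂⟩ := hb.exists_mem_snd_eq_of_mem_dirInv heb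
  have : e₁ = e₂ := hdist e₁ (haPi he₁) e₂ (hbPi he₂) (ht₁.trans ht₂.symm)
  exact Finset.disjoint_left.mp h he₁ (this ▸ he₂)

end DistinctTimes

lemma IsCyclePartition.replace_dirInv {Pi : Finset (PEdge V)} {P S : Finset (Finset (PEdge V))}
    (hP : IsCyclePartition Pi P) (hdist : DistinctTimes Pi) (hS : S ⊆ P) :
    IsCyclePartition ((Pi \ S.sup id) ∪ S.sup dirInv) ((P \ S) ∪ S.image dirInv) := by
  obtain ⟨hcyc, hsub, hdisj, hcov⟩ := hP
  have hdisjS : ∀ η ∈ P \ S, ∀ b ∈ S, Disjoint η b := fun η hη b hb =>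
    hdisj η (Finset.mem_sdiff.mp hη).1 b (hS hb) fun h => (Finset.mem_sdiff.mp hη).2 (h ▸ hb)
  have hkept : ∀ η ∈ P \ S, η ⊆ Pi \ S.sup id := fun η hη =>
    Finset.subset_sdiff.mpr
      ⟨hsub η (Finset.mem_sdiff.mp hη).1, Finset.disjoint_sup_right.mpr (hdisjS η hη)⟩
  have hmixed : ∀ η ∈ P \ S, ∀ b ∈ S, Disjoint η (dirInv b) := fun η hη b hb =>
    hdist.disjoint_dirInv_right (hcyc b (hS hb)) (hsub b (hS hb))
      (hsub η (Finset.mem_sdiff.mp hη).1) (hdisjS η hη b hb)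
  simp only [IsCyclePartition, Finset.forall_mem_union, Finset.forall_mem_image]
  refine ⟨⟨fun η hη => hcyc η (Finset.mem_sdiff.mp hη).1, fun a ha => (hcyc a (hS ha)).dirInv⟩,
    ⟨fun η hη => (hkept η hη).trans Finset.subset_union_left,
      fun a ha => (Finset.le_sup (f := dirInv) ha).trans Finset.subset_union_right⟩,
    ⟨fun η hη => ⟨fun η' hη' hne => ?_, fun b hb _ => hmixed η hη b hb⟩,
      fun a ha => ⟨fun η hη _ => (hmixed η hη a ha).symm, fun b hb hne => ?_⟩⟩,
    fun e he => ?_, fun e he => ?_⟩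
  · exact hdisj η (Finset.mem_sdiff.mp hη).1 η' (Finset.mem_sdiff.mp hη').1 hne
  · exact hdist.disjoint_dirInv (hcyc a (hS ha)) (hcyc b (hS hb)) (hsub a (hS ha))
      (hsub b (hS hb)) (hdisj a (hS ha) b (hS hb) fun h => hne (h ▸ rfl))
  · obtain ⟨hePi, heS⟩ := Finset.mem_sdiff.mp he
    obtain ⟨η, hη, heη⟩ := hcov e hePi
    have hηS : η ∉ S := fun h => heS (Finset.mem_sup.mpr ⟨η, h, heη⟩)
    exact ⟨η, Finset.mem_union_left _ (Finset.mem_sdiff.mpr ⟨hη, hηS⟩), heη⟩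
  · obtain ⟨a, ha, hea⟩ := Finset.mem_sup.mp he
    exact ⟨dirInv a, Finset.mem_union_right _ (Finset.mem_image_of_mem _ ha), hea⟩

noncomputable def undoDirInv (P S : Finset (Finset (PEdge V))) (η : Finset (PEdge V)) :
    Finset (PEdge V) :=
  if η ∈ P \ S then η else dirInv η

section UndoDirInv

variable {P S : Finset (Finset (PEdge V))} {η : Finset (PEdge V)}

lemma exists_eq_dirInv_of_mem_union (hη : η ∈ (P \ S) ∪ S.image dirInv) (hηS : η ∉ P \ S) :
    ∃ a ∈ S, η = dirInv a := by
  obtain ⟨a, ha, rfl⟩ := Finset.mem_image.mp ((Finset.mem_union.mp hη).resolve_left hηS)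
  exact ⟨a, ha, rfl⟩

lemma undoDirInv_mem (hcyc : ∀ a ∈ S, IsCycle a) (hS : S ⊆ P)
    (hη : η ∈ (P \ S) ∪ S.image dirInv) : undoDirInv P S η ∈ P := by
  unfold undoDirInv
  split_ifs with hηS
  · exact (Finset.mem_sdiff.mp hηS).1
  · obtain ⟨a, ha, rfl⟩ := exists_eq_dirInv_of_mem_union hη hηS
    rw [(hcyc a ha).dirInv_dirInv]
    exact hS ha

lemma injOn_undoDirInv (hcyc : ∀ a ∈ S, IsCycle a) :
    Set.InjOn (undoDirInv P S) ↑((P \ S) ∪ S.image dirInv) := by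
  intro η hη η' hη' h
  unfold undoDirInv at h
  split_ifs at h with h₁ h₂ h₂
  · exact h
  · obtain ⟨b, hb, rfl⟩ := exists_eq_dirInv_of_mem_union hη' h₂
    rw [(hcyc b hb).dirInv_dirInv] at h
    exact absurd (h ▸ hb) (Finset.mem_sdiff.mp h₁).2
  · obtain ⟨a, ha, rfl⟩ := exists_eq_dirInv_of_mem_union hη h₁
    rw [(hcyc a ha).dirInv_dirInv] at h
    exact absurd (h ▸ ha) (Finset.mem_sdiff.mp h₂).2
  · obtain ⟨a, ha, rfl⟩ := exists_eq_dirInv_of_mem_union hη h₁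
    obtain ⟨b, hb, rfl⟩ := exists_eq_dirInv_of_mem_union hη' h₂
    rw [(hcyc a ha).dirInv_dirInv, (hcyc b hb).dirInv_dirInv] at h
    rw [h]

lemma stepRel_undoDirInv {a b : Finset (PEdge V)} (ha : IsCycle a) (hb : IsCycle b) :
    stepRel (undoDirInv P S a) (undoDirInv P S b) ↔ stepRel a b := by
  unfold undoDirInv
  split_ifs
  · rfl
  · exact stepRel_dirInv_right ha hb
  · exact stepRel_dirInv_left ha hb
  · rw [stepRel_dirInv_left ha hb.dirInv, stepRel_dirInv_right ha hb]

end UndoDirInv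

lemma precRel_antisymm_of_injOn {P P' : Finset (Finset (PEdge V))}
    (f : Finset (PEdge V) → Finset (PEdge V)) (hf : ∀ η ∈ P', f η ∈ P)
    (hstep : ∀ a ∈ P', ∀ b ∈ P', stepRel a b → stepRel (f a) (f b)) (hinj : Set.InjOn f P')
    (hP : ∀ η ∈ P, ∀ η' ∈ P, precRel P η η' → precRel P η' η → η = η') :
    ∀ η ∈ P', ∀ η' ∈ P', precRel P' η η' → precRel P' η' η → η = η' := by
  have hmap : ∀ η η', precRel P' η η' → precRel P (f η) (f η') :=
    Relation.ReflTransGen.lift f fun a b ⟨ha, hb, hab⟩ => ⟨hf a ha, hf b hb, hstep a ha b hb hab⟩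
  exact fun η hη η' hη' h h' => hinj hη hη' (hP _ (hf η hη) _ (hf η' hη') (hmap _ _ h) (hmap _ _ h'))

theorem dirInv_properCyclePartition_general
    (Pi : Finset (PEdge V)) (hdist : DistinctTimes Pi)
    (P : Finset (Finset (PEdge V))) (hP : IsProperCyclePartition Pi P)
    (S : Finset (Finset (PEdge V))) (hS : S ⊆ P) :
    Balanced ((Pi \ S.sup id) ∪ S.sup dirInv) ∧
      IsProperCyclePartition ((Pi \ S.sup id) ∪ S.sup dirInv)
        ((P \ S) ∪ S.image dirInv) := by
  have hcycS : ∀ a ∈ S, IsCycle a := fun a ha => hP.1.1 a (hS ha)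
  have hCP := hP.1.replace_dirInv hdist hS
  refine ⟨hCP.balanced, hCP, precRel_antisymm_of_injOn (undoDirInv P S)
    (fun η hη => undoDirInv_mem hcycS hS hη) (fun a ha b hb => ?_) (injOn_undoDirInv hcycS) hP.2⟩
  exact (stepRel_undoDirInv (hCP.1 a ha) (hCP.1 b hb)).mpr

/-- Direction inversion commutes with the proper cycle partition: replacing
each cycle of `S ⊆ C(Π)` by its directional inverse yields a balanced set
whose proper cycle partition is `(C(Π) \ S) ∪ {η⁻¹ : η ∈ S}`. -/
theorem dirInv_properCyclePartition
    (Pi : Finset (PEdge V)) (hdist : DistinctTimes Pi) (hbal : Balanced Pi)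
    (P : Finset (Finset (PEdge V))) (hP : IsProperCyclePartition Pi P)
    (S : Finset (Finset (PEdge V))) (hS : S ⊆ P) :
    Balanced ((Pi \ S.sup id) ∪ S.sup dirInv) ∧
      IsProperCyclePartition ((Pi \ S.sup id) ∪ S.sup dirInv)
        ((P \ S) ∪ S.image dirInv) :=
  dirInv_properCyclePartition_general Pi hdist P hP S hS

end BKT
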